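/- Let C > 0, ε > 0, M > 0, m ∈ ℕ and z ∈ ℝ^m. The function s ↦ (1/(2M))‖z − s‖² + C·∑_{i=1}^m max(0, |s_i| − ε) on ℝ^m (Euclidean norm) attains its minimum at a unique point whose i-th coordinate equals z_i − C·M if z_i ≥ ε + C·M, equals ε if ε < z_i < ε + C·M, equals z_i if |z_i| ≤ ε, equals −ε if −ε − C·M < z_i < −ε, and equals z_i + C·M if z_i ≤ −ε − C·M. -/

import Mathlib

/-!
The objective separates over coordinates. On one coordinate, with `κ = C * M` and
`φ x = max 0 (|x| - ε)`, the residual `a - p` at the candidate `p` is a subgradient of `κ φ` at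
`p`. Expanding `(a - x)^2` around `p` then gives the quadratic growth
`F p + (x - p)^2 / (2M) ≤ F x` of the objective `F`, which yields minimality and uniqueness
at once.
-/

/-- The proximal point of `x ↦ κ * max 0 (|x| - ε)` at `a`. -/
noncomputable def epsInsensitiveProx (κ ε a : ℝ) : ℝ :=
  if ε + κ ≤ a then a - κ
  else if ε < a then ε
  else if -ε ≤ a then a
  else if -ε - κ < a then -ε
  else a + κ

section Scalar

variable {κ ε : ℝ}

theorem epsInsensitiveProx_spec (hκ : 0 ≤ κ) (hε : 0 ≤ ε) (a : ℝ) :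
    (ε + κ ≤ a → epsInsensitiveProx κ ε a = a - κ) ∧
    (ε < a ∧ a < ε + κ → epsInsensitiveProx κ ε a = ε) ∧
    (|a| ≤ ε → epsInsensitiveProx κ ε a = a) ∧
    (-ε - κ < a ∧ a < -ε → epsInsensitiveProx κ ε a = -ε) ∧
    (a ≤ -ε - κ → epsInsensitiveProx κ ε a = a + κ) := by
  unfold epsInsensitiveProx
  simp only [abs_le]
  refine ⟨fun h => ?_, fun h => ?_, fun h => ?_, fun h => ?_, fun h => ?_⟩ <;>
    (try obtain ⟨h, h'⟩ := h) <;> split_ifs <;> first | rfl | linarith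

theorem epsInsensitiveProx_subgradient (hκ : 0 ≤ κ) (hε : 0 ≤ ε) (a x : ℝ) :
    κ * max 0 (|epsInsensitiveProx κ ε a| - ε) +
        (a - epsInsensitiveProx κ ε a) * (x - epsInsensitiveProx κ ε a) ≤
      κ * max 0 (|x| - ε) := by
  have hφ_nonneg : 0 ≤ max 0 (|x| - ε) := le_max_left _ _
  have hφ_pos : x - ε ≤ max 0 (|x| - ε) :=
    le_max_of_le_right (by linarith [le_abs_self x])
  have hφ_neg : -x - ε ≤ max 0 (|x| - ε) :=
    le_max_of_le_right (by linarith [neg_abs_le x])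
  unfold epsInsensitiveProx
  split_ifs with h₁ h₂ h₃ h₄
  · rw [abs_of_nonneg (by linarith), max_eq_right (by linarith)]
    nlinarith [mul_le_mul_of_nonneg_left hφ_pos hκ]
  · rw [abs_of_nonneg hε, sub_self, max_self]
    rcases le_total x ε with hx | hx
    · nlinarith [mul_nonneg hκ hφ_nonneg]
    · nlinarith [mul_le_mul_of_nonneg_left hφ_pos hκ]
  · rw [max_eq_left (by linarith [abs_le.mpr ⟨h₃, not_lt.mp h₂⟩])]
    nlinarith [mul_nonneg hκ hφ_nonneg]
  · rw [abs_neg, abs_of_nonneg hε, sub_self, max_self]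
    rcases le_total (-ε) x with hx | hx
    · nlinarith [mul_nonneg hκ hφ_nonneg]
    · nlinarith [mul_le_mul_of_nonneg_left hφ_neg hκ]
  · rw [abs_of_nonpos (by linarith), max_eq_right (by linarith)]
    nlinarith [mul_le_mul_of_nonneg_left hφ_neg hκ]

theorem epsInsensitiveProx_quadratic_growth {C M : ℝ} (hC : 0 ≤ C) (hε : 0 ≤ ε) (hM : 0 < M)
    (a x : ℝ) :
    (1 / (2 * M)) * (a - epsInsensitiveProx (C * M) ε a) ^ 2 +
        C * max 0 (|epsInsensitiveProx (C * M) ε a| - ε) +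
        (1 / (2 * M)) * (x - epsInsensitiveProx (C * M) ε a) ^ 2 ≤
      (1 / (2 * M)) * (a - x) ^ 2 + C * max 0 (|x| - ε) := by
  have hsub := epsInsensitiveProx_subgradient (mul_nonneg hC hM.le) hε a x
  set p := epsInsensitiveProx (C * M) ε a
  rw [← sub_nonneg]
  have hgap : (1 / (2 * M)) * (a - x) ^ 2 + C * max 0 (|x| - ε) -
      ((1 / (2 * M)) * (a - p) ^ 2 + C * max 0 (|p| - ε) + (1 / (2 * M)) * (x - p) ^ 2) =
      (C * M * max 0 (|x| - ε) - (C * M * max 0 (|p| - ε) + (a - p) * (x - p))) / M := by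
    field_simp
    ring
  rw [hgap]
  exact div_nonneg (by linarith) hM.le

end Scalar

theorem eq_of_forall_le_of_quadratic_growth {E : Type*} [NormedAddCommGroup E] {F : E → ℝ}
    {s s' : E} {c : ℝ} (hc : 0 < c) (hgrowth : ∀ t, F s + c * ‖t - s‖ ^ 2 ≤ F t)
    (hs' : ∀ t, F s' ≤ F t) : s' = s := by
  have h : c * ‖s' - s‖ ^ 2 ≤ 0 := by linarith [hgrowth s', hs' s]
  have : ‖s' - s‖ ^ 2 = 0 := le_antisymm (nonpos_of_mul_nonpos_right h hc) (sq_nonneg _)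
  simpa [sub_eq_zero] using this

section Euclidean

variable {ι : Type*} [Fintype ι]

noncomputable def epsInsensitiveProxObjective (C ε M : ℝ) (z s : EuclideanSpace ℝ ι) : ℝ :=
  (1 / (2 * M)) * ‖z - s‖ ^ 2 + C * ∑ i, max 0 (|s i| - ε)

theorem epsInsensitiveProxObjective_quadratic_growth {C ε M : ℝ} (hC : 0 ≤ C) (hε : 0 ≤ ε)
    (hM : 0 < M) (z t : EuclideanSpace ℝ ι) :
    epsInsensitiveProxObjective C ε M z
        (WithLp.toLp 2 fun i => epsInsensitiveProx (C * M) ε (z i)) +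
        (1 / (2 * M)) * ‖t - WithLp.toLp 2 fun i => epsInsensitiveProx (C * M) ε (z i)‖ ^ 2 ≤
      epsInsensitiveProxObjective C ε M z t := by
  simp only [epsInsensitiveProxObjective, EuclideanSpace.real_norm_sq_eq, PiLp.sub_apply,
    Finset.mul_sum, ← Finset.sum_add_distrib]
  exact Finset.sum_le_sum fun i _ => epsInsensitiveProx_quadratic_growth hC hε hM (z i) (t i)

end Euclidean

/-- For `C > 0`, `ε > 0`, `M > 0`, `z ∈ ℝ^m`, the function
`s ↦ (1/(2M))‖z − s‖² + C·∑ᵢ max(0, |sᵢ| − ε)` attains its minimum at a unique point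
whose `i`-th coordinate is `zᵢ − C·M` if `zᵢ ≥ ε + C·M`, `ε` if `ε < zᵢ < ε + C·M`,
`zᵢ` if `|zᵢ| ≤ ε`, `−ε` if `−ε − C·M < zᵢ < −ε`, and `zᵢ + C·M` if `zᵢ ≤ −ε − C·M`. -/
theorem stmt_11 (C ε M : ℝ) (hC : 0 < C) (hε : 0 < ε) (hM : 0 < M) (m : ℕ)
    (z : EuclideanSpace ℝ (Fin m)) :
    ∃ s : EuclideanSpace ℝ (Fin m),
      (∀ t : EuclideanSpace ℝ (Fin m),
        (1 / (2 * M)) * ‖z - s‖ ^ 2 + C * ∑ i, max 0 (|s i| - ε) ≤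
          (1 / (2 * M)) * ‖z - t‖ ^ 2 + C * ∑ i, max 0 (|t i| - ε)) ∧
      (∀ s' : EuclideanSpace ℝ (Fin m),
        (∀ t : EuclideanSpace ℝ (Fin m),
          (1 / (2 * M)) * ‖z - s'‖ ^ 2 + C * ∑ i, max 0 (|s' i| - ε) ≤
            (1 / (2 * M)) * ‖z - t‖ ^ 2 + C * ∑ i, max 0 (|t i| - ε)) → s' = s) ∧
      ∀ i : Fin m,
        (ε + C * M ≤ z i → s i = z i - C * M) ∧
        (ε < z i ∧ z i < ε + C * M → s i = ε) ∧
        (|z i| ≤ ε → s i = z i) ∧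
        (-ε - C * M < z i ∧ z i < -ε → s i = -ε) ∧
        (z i ≤ -ε - C * M → s i = z i + C * M) := by
  set s : EuclideanSpace ℝ (Fin m) := WithLp.toLp 2 fun i => epsInsensitiveProx (C * M) ε (z i)
  have hgrowth (t : EuclideanSpace ℝ (Fin m)) :
      epsInsensitiveProxObjective C ε M z s + (1 / (2 * M)) * ‖t - s‖ ^ 2 ≤
        epsInsensitiveProxObjective C ε M z t :=
    epsInsensitiveProxObjective_quadratic_growth hC.le hε.le hM z t
  refine ⟨s, fun t => (le_add_of_nonneg_right (by positivity)).trans (hgrowth t),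
    fun s' hs' => eq_of_forall_le_of_quadratic_growth (by positivity) hgrowth hs',
    fun i => epsInsensitiveProx_spec (mul_nonneg hC.le hM.le) hε.le (z i)⟩
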